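/- arXiv:2312.03693 — 2 statements merged into one kernel-verified Lean document; each statement's English description precedes it below -/
import Mathlib

section
/- Let $0 \le p_1 < q_1$ and $0 \le p_2 < q_2$ with $p_1 \le p_2$ and $q_1 < q_2$. Define $h(x) = \frac{x^{p_1} - x^{q_1}}{x^{p_2} - x^{q_2}}$ for $x \in (0,1)$. Then $h$ is strictly decreasing on $(0,1)$ and $h(x) \ge \frac{q_1 - p_1}{q_2 - p_2}$ for all $x \in (0,1)$. -/
open Set

/-
Put `y = x ^ (q₂ - p₁)`. Dividing numerator and denominator by `x ^ p₁ (1 - y)` turns the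
ratio into `S_θ(y) / (1 - S_φ(y))` with `θ = (q₁ - p₁)/(q₂ - p₁) ∈ (0, 1)` and
`φ = (p₂ - p₁)/(q₂ - p₁) ∈ [0, 1)`, where `S_θ(y) = (1 - y ^ θ)/(1 - y)` (`rpowChordSlope`) is
the slope of the chord of the concave function `t ↦ t ^ θ` over `[y, 1]`. Chord slopes of a
concave function decrease in `y` and dominate the derivative `θ` at `1`, so the ratio decreases
strictly in `y`, hence in `x`, and is at least `θ / (1 - φ) = (q₁ - p₁)/(q₂ - p₂)`.
-/

theorem StrictAntiOn.div_of_monotoneOn {α 𝕜 : Type*} [Preorder α] [Field 𝕜] [LinearOrder 𝕜]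
    [IsStrictOrderedRing 𝕜] {f g : α → 𝕜} {s : Set α} (hf : StrictAntiOn f s)
    (hg : MonotoneOn g s) (hf₀ : ∀ x ∈ s, 0 ≤ f x) (hg₀ : ∀ x ∈ s, 0 < g x) :
    StrictAntiOn (fun x ↦ f x / g x) s := fun x hx y hy hxy ↦
  calc f y / g y ≤ f y / g x := div_le_div_of_nonneg_left (hf₀ y hy) (hg₀ x hx) (hg hx hy hxy.le)
    _ < f x / g x := div_lt_div_of_pos_right (hf hx hy hxy) (hg₀ x hx)

namespace Real

noncomputable def rpowChordSlope (θ y : ℝ) : ℝ := (1 - y ^ θ) / (1 - y)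

lemma rpowChordSlope_eq_secant (θ : ℝ) {y : ℝ} :
    rpowChordSlope θ y = (y ^ θ - 1 ^ θ) / (y - 1) := by
  rw [rpowChordSlope, one_rpow, ← neg_div_neg_eq, neg_sub, neg_sub]

lemma strictAntiOn_rpowChordSlope {θ : ℝ} (hθ₀ : 0 < θ) (hθ₁ : θ < 1) :
    StrictAntiOn (rpowChordSlope θ) (Ioo 0 1) := by
  intro x hx y hy hxy
  simp only [rpowChordSlope_eq_secant]
  exact (strictConcaveOn_rpow hθ₀ hθ₁).secant_strict_mono (mem_Ici.2 zero_le_one)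
    (mem_Ici.2 hx.1.le) (mem_Ici.2 hy.1.le) hx.2.ne hy.2.ne hxy

lemma antitoneOn_rpowChordSlope {θ : ℝ} (hθ₀ : 0 ≤ θ) (hθ₁ : θ ≤ 1) :
    AntitoneOn (rpowChordSlope θ) (Ioo 0 1) := by
  intro x hx y hy hxy
  have := (concaveOn_rpow hθ₀ hθ₁).neg.secant_mono (mem_Ici.2 zero_le_one)
    (mem_Ici.2 hx.1.le) (mem_Ici.2 hy.1.le) hx.2.ne hy.2.ne hxy
  have hneg (t : ℝ) : (-t ^ θ - -1 ^ θ) / (t - 1) = -((t ^ θ - 1 ^ θ) / (t - 1)) := by ring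
  rw [rpowChordSlope_eq_secant, rpowChordSlope_eq_secant]
  simp only [Pi.neg_apply, hneg] at this
  linarith

lemma le_rpowChordSlope {θ : ℝ} (hθ₀ : 0 ≤ θ) (hθ₁ : θ ≤ 1) {y : ℝ} (hy₀ : 0 ≤ y) (hy₁ : y < 1) :
    θ ≤ rpowChordSlope θ y := by
  have := rpow_one_add_le_one_add_mul_self (s := y - 1) (by linarith) hθ₀ hθ₁
  rw [add_sub_cancel] at this
  rw [rpowChordSlope, le_div_iff₀ (by linarith)]
  linarith

lemma rpowChordSlope_lt_one {θ : ℝ} (hθ : θ < 1) {y : ℝ} (hy₀ : 0 < y) (hy₁ : y < 1) :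
    rpowChordSlope θ y < 1 := by
  have : y ^ (1 : ℝ) < y ^ θ := rpow_lt_rpow_of_exponent_gt hy₀ hy₁ hθ
  rw [rpow_one] at this
  rw [rpowChordSlope, div_lt_one (by linarith)]
  linarith

lemma strictAntiOn_rpowChordSlope_div_one_sub {θ φ : ℝ} (hθ₀ : 0 < θ) (hθ₁ : θ < 1) (hφ₀ : 0 ≤ φ)
    (hφ₁ : φ < 1) :
    StrictAntiOn (fun y ↦ rpowChordSlope θ y / (1 - rpowChordSlope φ y)) (Ioo 0 1) :=
  (strictAntiOn_rpowChordSlope hθ₀ hθ₁).div_of_monotoneOn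
    (fun _ hx _ hy hxy ↦ sub_le_sub_left (antitoneOn_rpowChordSlope hφ₀ hφ₁.le hx hy hxy) 1)
    (fun _ hy ↦ hθ₀.le.trans (le_rpowChordSlope hθ₀.le hθ₁.le hy.1.le hy.2))
    (fun _ hy ↦ sub_pos.2 (rpowChordSlope_lt_one hφ₁ hy.1 hy.2))

lemma div_one_sub_le_rpowChordSlope_div_one_sub {θ φ : ℝ} (hθ₀ : 0 < θ) (hθ₁ : θ < 1) (hφ₀ : 0 ≤ φ)
    (hφ₁ : φ < 1) {y : ℝ} (hy : y ∈ Ioo 0 1) :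
    θ / (1 - φ) ≤ rpowChordSlope θ y / (1 - rpowChordSlope φ y) :=
  div_le_div₀ (hθ₀.le.trans (le_rpowChordSlope hθ₀.le hθ₁.le hy.1.le hy.2))
    (le_rpowChordSlope hθ₀.le hθ₁.le hy.1.le hy.2)
    (sub_pos.2 (rpowChordSlope_lt_one hφ₁ hy.1 hy.2))
    (sub_le_sub_left (le_rpowChordSlope hφ₀ hφ₁.le hy.1.le hy.2) 1)

lemma rpow_sub_rpow_eq_mul {x c : ℝ} (hx : 0 < x) (hc : c ≠ 0) (p q : ℝ) :
    x ^ p - x ^ q = x ^ p * (1 - (x ^ c) ^ ((q - p) / c)) := by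
  rw [← rpow_mul hx.le, mul_div_cancel₀ _ hc, mul_one_sub, ← rpow_add hx, add_sub_cancel]

lemma rpow_sub_rpow_div_rpow_sub_rpow {x p₁ q₁ p₂ q₂ : ℝ} (hx₀ : 0 < x) (hx₁ : x < 1)
    (hpq : p₁ < q₂) :
    (x ^ p₁ - x ^ q₁) / (x ^ p₂ - x ^ q₂) =
      rpowChordSlope ((q₁ - p₁) / (q₂ - p₁)) (x ^ (q₂ - p₁)) /
        (1 - rpowChordSlope ((p₂ - p₁) / (q₂ - p₁)) (x ^ (q₂ - p₁))) := by
  have hc : q₂ - p₁ ≠ 0 := (sub_pos.2 hpq).ne'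
  have hy : x ^ (q₂ - p₁) < 1 := rpow_lt_one hx₀.le hx₁ (sub_pos.2 hpq)
  rw [show x ^ p₂ - x ^ q₂ = (x ^ p₁ - x ^ q₂) - (x ^ p₁ - x ^ p₂) by ring,
    rpow_sub_rpow_eq_mul hx₀ hc p₁ q₁, rpow_sub_rpow_eq_mul hx₀ hc p₁ q₂,
    rpow_sub_rpow_eq_mul hx₀ hc p₁ p₂, div_self hc, rpow_one, rpowChordSlope, rpowChordSlope]
  have : 1 - x ^ (q₂ - p₁) ≠ 0 := (sub_pos.2 hy).ne'
  field_simp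

end Real

open Real in
theorem ratio_lemma_decreasing_general (p₁ q₁ p₂ q₂ : ℝ)
    (hq₁ : p₁ < q₁) (hq₂ : p₂ < q₂)
    (h12 : p₁ ≤ p₂) (hqq : q₁ < q₂)
    (h : ℝ → ℝ) (hh : ∀ x ∈ Ioo (0:ℝ) 1, h x = (x ^ p₁ - x ^ q₁) / (x ^ p₂ - x ^ q₂)) :
    StrictAntiOn h (Ioo (0:ℝ) 1) ∧
      ∀ x ∈ Ioo (0:ℝ) 1, (q₁ - p₁) / (q₂ - p₂) ≤ h x := by
  set c := q₂ - p₁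
  set θ := (q₁ - p₁) / c
  set φ := (p₂ - p₁) / c
  have hc : 0 < c := by simp only [c]; linarith
  have hθ₀ : 0 < θ := div_pos (by linarith) hc
  have hθ₁ : θ < 1 := (div_lt_one hc).2 (by linarith)
  have hφ₀ : 0 ≤ φ := div_nonneg (by linarith) hc.le
  have hφ₁ : φ < 1 := (div_lt_one hc).2 (by linarith)
  have hh' : EqOn h ((fun y ↦ rpowChordSlope θ y / (1 - rpowChordSlope φ y)) ∘ (· ^ c))
      (Ioo 0 1) :=
    fun x hx ↦ (hh x hx).trans (rpow_sub_rpow_div_rpow_sub_rpow hx.1 hx.2 (by linarith))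
  have hmaps : MapsTo (· ^ c) (Ioo (0 : ℝ) 1) (Ioo 0 1) :=
    fun x hx ↦ ⟨rpow_pos_of_pos hx.1 c, rpow_lt_one hx.1.le hx.2 hc⟩
  refine ⟨hh'.congr_strictAntiOn.2 ?_, fun x hx ↦ ?_⟩
  · exact (strictAntiOn_rpowChordSlope_div_one_sub hθ₀ hθ₁ hφ₀ hφ₁).comp_strictMonoOn
      ((strictMonoOn_rpow_Ici_of_exponent_pos hc).mono fun _ hx ↦ le_of_lt hx.1) hmaps
  · have hφc : 1 - φ = (q₂ - p₂) / c := by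
      rw [eq_div_iff hc.ne', sub_mul, one_mul, div_mul_cancel₀ _ hc.ne']
      ring
    calc (q₁ - p₁) / (q₂ - p₂) = θ / (1 - φ) := by rw [hφc, div_div_div_cancel_right₀ hc.ne']
      _ ≤ h x := (hh' hx).symm ▸
        div_one_sub_le_rpowChordSlope_div_one_sub hθ₀ hθ₁ hφ₀ hφ₁ (hmaps hx)

theorem ratio_lemma_decreasing (p₁ q₁ p₂ q₂ : ℝ)
    (hp₁ : 0 ≤ p₁) (hq₁ : p₁ < q₁) (hp₂ : 0 ≤ p₂) (hq₂ : p₂ < q₂)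
    (h12 : p₁ ≤ p₂) (hqq : q₁ < q₂)
    (h : ℝ → ℝ) (hh : ∀ x ∈ Ioo (0:ℝ) 1, h x = (x ^ p₁ - x ^ q₁) / (x ^ p₂ - x ^ q₂)) :
    StrictAntiOn h (Ioo (0:ℝ) 1) ∧
      ∀ x ∈ Ioo (0:ℝ) 1, (q₁ - p₁) / (q₂ - p₂) ≤ h x :=
  ratio_lemma_decreasing_general p₁ q₁ p₂ q₂ hq₁ hq₂ h12 hqq h hh
end

section
/- Fix $q$ with $1 < q < \frac{7}{3}$. The function $h(s) = (4-s)\,s\,B\!\left(\frac{s}{7-3q} + \frac12, \frac12\right)$ is strictly increasing on $(0, q-1)$. -/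
/-!
Let `b = s / (7 - 3q)`. Integrating `-log t ≤ t^(-1/2) - t^(1/2)` (that is, `u ≤ sinh u`)
against the Beta weight gives
`-∂ₓB(b + 1/2, 1/2) ≤ B(b, 3/2) = B(b + 1, 1/2) / (2b) ≤ B(b + 1/2, 1/2) / (2b)`,
the middle step being the Beta recurrence. Hence `h'(s) ≥ (2 - 3s/2) B(b + 1/2, 1/2) > 0`
for `0 < s < 4/3`, an interval containing `(0, q - 1)`.
-/

open MeasureTheory Set

noncomputable def betaReal (x y : ℝ) : ℝ :=
  ∫ t in (0:ℝ)..1, t ^ (x - 1) * (1 - t) ^ (y - 1)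

open Real intervalIntegral

lemma ofReal_betaIntegrand {t : ℝ} (ht : t ∈ Icc (0:ℝ) 1) (x y : ℝ) :
    ((t ^ (x - 1) * (1 - t) ^ (y - 1) : ℝ) : ℂ) =
      (t : ℂ) ^ ((x : ℂ) - 1) * (1 - (t : ℂ)) ^ ((y : ℂ) - 1) := by
  rw [Complex.ofReal_mul, Complex.ofReal_cpow ht.1, Complex.ofReal_cpow (sub_nonneg.2 ht.2)]
  push_cast
  rfl

lemma ofReal_betaReal (x y : ℝ) : (betaReal x y : ℂ) = Complex.betaIntegral x y := by
  rw [betaReal, ← intervalIntegral.integral_ofReal, Complex.betaIntegral]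
  refine integral_congr fun t ht => ofReal_betaIntegrand ?_ x y
  rwa [uIcc_of_le zero_le_one] at ht

lemma intervalIntegrable_betaIntegrand {x y : ℝ} (hx : 0 < x) (hy : 0 < y) :
    IntervalIntegrable (fun t : ℝ => t ^ (x - 1) * (1 - t) ^ (y - 1)) volume 0 1 := by
  have hc := (Complex.betaIntegral_convergent (u := x) (v := y) (by simpa) (by simpa)).norm
  refine (intervalIntegrable_congr fun t ht => ?_).1 hc
  have ht' : t ∈ Icc (0:ℝ) 1 := by
    rw [uIoc_of_le zero_le_one] at ht; exact Ioc_subset_Icc_self ht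
  rw [← ofReal_betaIntegrand ht', Complex.norm_real, Real.norm_of_nonneg]
  exact mul_nonneg (rpow_nonneg ht'.1 _) (rpow_nonneg (sub_nonneg.2 ht'.2) _)

lemma betaReal_pos {x y : ℝ} (hx : 0 < x) (hy : 0 < y) : 0 < betaReal x y :=
  intervalIntegral_pos_of_pos_on (intervalIntegrable_betaIntegrand hx hy)
    (fun _ ht => mul_pos (rpow_pos_of_pos ht.1 _) (rpow_pos_of_pos (sub_pos.2 ht.2) _)) one_pos

lemma mul_betaReal_add_one {x y : ℝ} (hx : 0 < x) (hy : 0 < y) :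
    x * betaReal x (y + 1) = y * betaReal (x + 1) y := by
  have h := Complex.betaIntegral_recurrence (u := x) (v := y) (by simpa) (by simpa)
  exact_mod_cast (by push_cast [ofReal_betaReal]; exact h :
    ((x * betaReal x (y + 1) : ℝ) : ℂ) = ((y * betaReal (x + 1) y : ℝ) : ℂ))

lemma betaReal_le_betaReal_of_le {x x' y : ℝ} (hx : 0 < x) (hy : 0 < y) (hxx' : x ≤ x') :
    betaReal x' y ≤ betaReal x y :=
  integral_mono_on_of_le_Ioo zero_le_one
    (intervalIntegrable_betaIntegrand (hx.trans_le hxx') hy)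
    (intervalIntegrable_betaIntegrand hx hy)
    fun _ ht => mul_le_mul_of_nonneg_right
      (rpow_le_rpow_of_exponent_ge ht.1 ht.2.le (by linarith))
      (rpow_nonneg (sub_nonneg.2 ht.2.le) _)

lemma neg_log_mul_rpow_le {t ε : ℝ} (ht : 0 < t) (hε : 0 < ε) (a : ℝ) :
    -log t * t ^ a ≤ t ^ (a - ε) / ε := by
  have h := log_le_rpow_div (inv_nonneg.2 ht.le) hε
  rw [log_inv, inv_rpow ht.le, ← rpow_neg ht.le] at h
  calc -log t * t ^ a ≤ t ^ (-ε) / ε * t ^ a := by gcongr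
    _ = t ^ (a - ε) / ε := by rw [div_mul_eq_mul_div, ← rpow_add ht, neg_add_eq_sub]

lemma hasDerivAt_betaReal_left {x y : ℝ} (hx : 0 < x) (hy : 0 < y) :
    HasDerivAt (fun x => betaReal x y)
      (∫ t in (0:ℝ)..1, log t * (t ^ (x - 1) * (1 - t) ^ (y - 1))) x := by
  refine (hasDerivAt_integral_of_dominated_loc_of_deriv_le
    (F := fun x t => t ^ (x - 1) * (1 - t) ^ (y - 1))
    (F' := fun x t => log t * (t ^ (x - 1) * (1 - t) ^ (y - 1)))
    (bound := fun t => 4 / x * (t ^ (x / 4 - 1) * (1 - t) ^ (y - 1)))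
    (Metric.ball_mem_nhds x (half_pos hx))
    (.of_forall fun _ => by fun_prop) (intervalIntegrable_betaIntegrand hx hy)
    (by fun_prop) ?_ ((intervalIntegrable_betaIntegrand (by positivity) hy).const_mul _) ?_).2
  · refine .of_forall fun t ht x' hx' => ?_
    rw [uIoc_of_le zero_le_one] at ht
    rw [Metric.mem_ball, Real.dist_eq, abs_lt] at hx'
    have hlog : log t ≤ 0 := log_nonpos ht.1.le ht.2
    have h1t : 0 ≤ (1 - t) ^ (y - 1) := rpow_nonneg (sub_nonneg.2 ht.2) _
    rw [norm_mul, norm_mul, norm_of_nonpos hlog, norm_of_nonneg (rpow_nonneg ht.1.le _),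
      norm_of_nonneg h1t, ← mul_assoc, ← mul_assoc]
    refine mul_le_mul_of_nonneg_right ?_ h1t
    calc -log t * t ^ (x' - 1) ≤ -log t * t ^ (x / 2 - 1) :=
          mul_le_mul_of_nonneg_left (rpow_le_rpow_of_exponent_ge ht.1 ht.2 (by linarith))
            (neg_nonneg.2 hlog)
      _ ≤ t ^ (x / 2 - 1 - x / 4) / (x / 4) := neg_log_mul_rpow_le ht.1 (by positivity) _
      _ = 4 / x * t ^ (x / 4 - 1) := by ring_nf
  · refine .of_forall fun t ht x' _ => ?_
    rw [uIoc_of_le zero_le_one] at ht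
    have h := ((hasDerivAt_id x').sub_const 1).const_rpow ht.1 |>.mul_const ((1 - t) ^ (y - 1))
    simpa [mul_assoc] using h

lemma neg_log_le_rpow_neg_half_sub_rpow_half {t : ℝ} (ht : 0 < t) (ht1 : t ≤ 1) :
    -log t ≤ t ^ (-(1 / 2) : ℝ) - t ^ (1 / 2 : ℝ) := by
  have hu : 0 ≤ -log t / 2 := by linarith [log_nonpos ht.le ht1]
  have h := self_le_sinh_iff.2 hu
  rw [sinh_eq] at h
  rw [rpow_def_of_pos ht, rpow_def_of_pos ht, show log t * -(1 / 2) = -log t / 2 by ring,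
    show log t * (1 / 2) = -(-log t / 2) by ring]
  linarith

lemma betaIntegrand_half_mul_neg_log_le {b t : ℝ} (ht : 0 < t) (ht1 : t ≤ 1) :
    -log t * (t ^ (b + 1 / 2 - 1) * (1 - t) ^ (1 / 2 - 1 : ℝ)) ≤
      t ^ (b - 1) * (1 - t) ^ (3 / 2 - 1 : ℝ) := by
  have h1t : 0 ≤ 1 - t := sub_nonneg.2 ht1
  calc -log t * (t ^ (b + 1 / 2 - 1) * (1 - t) ^ (1 / 2 - 1 : ℝ))
      ≤ (t ^ (-(1 / 2) : ℝ) - t ^ (1 / 2 : ℝ)) *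
          (t ^ (b + 1 / 2 - 1) * (1 - t) ^ (1 / 2 - 1 : ℝ)) :=
        mul_le_mul_of_nonneg_right (neg_log_le_rpow_neg_half_sub_rpow_half ht ht1)
          (mul_nonneg (rpow_nonneg ht.le _) (rpow_nonneg h1t _))
    _ = t ^ (b - 1) * ((1 - t) * (1 - t) ^ (1 / 2 - 1 : ℝ)) := by
        rw [sub_mul, ← mul_assoc, ← mul_assoc, ← rpow_add ht, ← rpow_add ht,
          show -(1 / 2) + (b + 1 / 2 - 1) = b - 1 by ring,
          show 1 / 2 + (b + 1 / 2 - 1) = (b - 1) + 1 by ring, rpow_add_one ht.ne']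
        ring
    _ = t ^ (b - 1) * (1 - t) ^ (3 / 2 - 1 : ℝ) := by
        rw [mul_comm (1 - t), ← rpow_add_one' h1t (by norm_num)]
        norm_num

lemma neg_betaReal_div_le_integral_log {b : ℝ} (hb : 0 < b) :
    -(betaReal (b + 1 / 2) (1 / 2) / (2 * b)) ≤
      ∫ t in (0:ℝ)..1, log t * (t ^ (b + 1 / 2 - 1) * (1 - t) ^ (1 / 2 - 1 : ℝ)) := by
  have h_neg_log :
      -(∫ t in (0:ℝ)..1, log t * (t ^ (b + 1 / 2 - 1) * (1 - t) ^ (1 / 2 - 1 : ℝ))) ≤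
        betaReal b (3 / 2) := by
    rw [← intervalIntegral.integral_neg, betaReal, integral_of_le zero_le_one,
      integral_of_le zero_le_one]
    refine integral_mono_of_nonneg ?_ (intervalIntegrable_betaIntegrand hb (by norm_num)).1 ?_
    · refine (ae_restrict_iff' measurableSet_Ioc).2 (.of_forall fun t ht => ?_)
      simp only [Pi.zero_apply, ← neg_mul]
      exact mul_nonneg (neg_nonneg.2 (log_nonpos ht.1.le ht.2))
        (mul_nonneg (rpow_nonneg ht.1.le _) (rpow_nonneg (sub_nonneg.2 ht.2) _))
    · refine (ae_restrict_iff' measurableSet_Ioc).2 (.of_forall fun t ht => ?_)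
      simp only [← neg_mul]
      exact betaIntegrand_half_mul_neg_log_le ht.1 ht.2
  have h_rec : b * betaReal b (3 / 2) = 1 / 2 * betaReal (b + 1) (1 / 2) := by
    rw [← mul_betaReal_add_one hb (by norm_num)]; norm_num
  have h_mono : betaReal (b + 1) (1 / 2) ≤ betaReal (b + 1 / 2) (1 / 2) :=
    betaReal_le_betaReal_of_le (by positivity) (by norm_num) (by linarith)
  have h_bound : betaReal b (3 / 2) ≤ betaReal (b + 1 / 2) (1 / 2) / (2 * b) := by
    rw [le_div_iff₀ (by positivity)]; linarith
  linarith

lemma hasDerivAt_sub_mul_mul_betaReal {c s : ℝ} (hc : 0 < c) (hs : 0 ≤ s) :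
    HasDerivAt (fun s => (4 - s) * s * betaReal (s / c + 1 / 2) (1 / 2))
      ((4 - 2 * s) * betaReal (s / c + 1 / 2) (1 / 2) + (4 - s) * s *
        ((∫ t in (0:ℝ)..1, log t * (t ^ (s / c + 1 / 2 - 1) * (1 - t) ^ (1 / 2 - 1 : ℝ))) *
          (1 / c)))
      s := by
  have hlin : HasDerivAt (fun s => s / c + 1 / 2) (1 / c) s := by
    simpa using ((hasDerivAt_id' s).div_const c).add_const (1 / 2)
  have hpoly : HasDerivAt (fun s : ℝ => (4 - s) * s) (4 - 2 * s) s :=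
    (((hasDerivAt_id' s).const_sub 4).mul (hasDerivAt_id' s)).congr_deriv (by ring)
  exact hpoly.mul ((hasDerivAt_betaReal_left (by positivity) (by norm_num)).comp s hlin)

lemma strictMonoOn_sub_mul_mul_betaReal {c : ℝ} (hc : 0 < c) :
    StrictMonoOn (fun s => (4 - s) * s * betaReal (s / c + 1 / 2) (1 / 2)) (Icc 0 (4 / 3)) := by
  refine strictMonoOn_of_hasDerivWithinAt_pos (convex_Icc 0 (4 / 3))
    (fun s hs => (hasDerivAt_sub_mul_mul_betaReal hc hs.1).continuousAt.continuousWithinAt)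
    (fun s hs => (hasDerivAt_sub_mul_mul_betaReal hc (interior_subset hs).1).hasDerivWithinAt)
    fun s hs => ?_
  rw [interior_Icc] at hs
  obtain ⟨hs0, hs1⟩ := hs
  set B := betaReal (s / c + 1 / 2) (1 / 2)
  set D := ∫ t in (0:ℝ)..1, log t * (t ^ (s / c + 1 / 2 - 1) * (1 - t) ^ (1 / 2 - 1 : ℝ))
  have hB : 0 < B := betaReal_pos (by positivity) (by norm_num)
  have hD : -(4 - s) * B / 2 ≤ (4 - s) * s * (D * (1 / c)) :=
    calc -(4 - s) * B / 2 = (4 - s) * s * (-(B / (2 * (s / c))) * (1 / c)) := by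
          field_simp
      _ ≤ (4 - s) * s * (D * (1 / c)) := by
          gcongr
          · nlinarith
          · exact neg_betaReal_div_le_integral_log (by positivity)
  linarith [mul_pos (by linarith : (0:ℝ) < 2 - 3 / 2 * s) hB]

theorem h_strict_mono_general (q : ℝ) (hq73 : q < 7/3) :
    StrictMonoOn (fun s : ℝ => (4 - s) * s * betaReal (s / (7 - 3*q) + 1/2) (1/2))
      (Ioo (0:ℝ) (q - 1)) :=
  (strictMonoOn_sub_mul_mul_betaReal (by linarith)).mono
    (Ioo_subset_Icc_self.trans (Icc_subset_Icc_right (by linarith)))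

theorem h_strict_mono (q : ℝ) (hq : 1 < q) (hq73 : q < 7/3) :
    StrictMonoOn (fun s : ℝ => (4 - s) * s * betaReal (s / (7 - 3*q) + 1/2) (1/2))
      (Ioo (0:ℝ) (q - 1)) :=
  h_strict_mono_general q hq73
end
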